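/- arXiv:1704.03064 — 2 statements merged into one kernel-verified Lean document; each statement's English description precedes it below -/
import Mathlib

section
/- Let n, m be positive integers with m ≤ n. Let J₁ ∈ ℝⁿ (the transposed objective gradient), F₂ : ℝⁿ → ℝᵐ a map, x* ∈ ℝⁿ, J₂ an m×n real matrix with full row rank (the Jacobian of F₂ at x*), C a symmetric positive definite n×n real matrix, and α ∈ (0,1). Define G := (Iₙ − T^C J₂) C⁻¹ J₁ and Δx* := −α·G − T₂·F₂(x*). If Δx* = 0, then F₂(x*) = 0 and there exists λ ∈ ℝᵐ such that J₁ + J₂ᵀ λ = 0; that is, x* satisfies the KKT optimality conditions of the equality-constrained problem min F₁(x) s.t. F₂(x) = 0 (Theorem 1: any fixed point of the interpolated SQP iteration is a KKT point). -/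
/-!
Applying `J₂` to the fixed-point equation `α G + T₂ F₂(x*) = 0` kills `G`, because
`J₂ T^C = I` makes `J₂ (I - T^C J₂) = 0`, and leaves `F₂(x*)`, because `J₂ T₂ = I`.
Hence `F₂(x*) = 0`, and then `G = 0` as `α ≠ 0`. Finally `G = 0` reads
`C⁻¹ J₁ = T^C J₂ C⁻¹ J₁`; multiplying by `C` gives `J₁ = J₂ᵀ (J₂ C⁻¹ J₂ᵀ)⁻¹ J₂ C⁻¹ J₁`,
so `λ = -(J₂ C⁻¹ J₂ᵀ)⁻¹ J₂ C⁻¹ J₁` is a Lagrange multiplier.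
-/

open Matrix

/-- `T^C := C⁻¹ J₂ᵀ (J₂ C⁻¹ J₂ᵀ)⁻¹`. -/
noncomputable def TCmat {m n : ℕ} (J₂ : Matrix (Fin m) (Fin n) ℝ)
    (C : Matrix (Fin n) (Fin n) ℝ) : Matrix (Fin n) (Fin m) ℝ :=
  C⁻¹ * J₂ᵀ * (J₂ * C⁻¹ * J₂ᵀ)⁻¹

/-- Moore–Penrose generalized right inverse `T₂ := J₂ᵀ (J₂ J₂ᵀ)⁻¹`. -/
noncomputable def T2 {m n : ℕ} (J₂ : Matrix (Fin m) (Fin n) ℝ) :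
    Matrix (Fin n) (Fin m) ℝ :=
  J₂ᵀ * (J₂ * J₂ᵀ)⁻¹

namespace Matrix

variable {m n R : Type*} [Fintype m] [Fintype n]

theorem vecMul_injective_of_mulVec_surjective [Semiring R] [DecidableEq m]
    {A : Matrix m n R} (hA : Function.Surjective A.mulVec) : Function.Injective A.vecMul := by
  obtain ⟨B, hAB⟩ := mulVec_surjective_iff_exists_right_inverse.mp hA
  intro v w h
  simpa [vecMul_vecMul, hAB] using congrArg (· ᵥ* B) h

theorem PosDef.mul_mul_transpose_of_mulVec_surjective [DecidableEq m] {A : Matrix n n ℝ}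
    (hA : A.PosDef) {B : Matrix m n ℝ} (hB : Function.Surjective B.mulVec) :
    (B * A * Bᵀ).PosDef := by
  simpa using hA.mul_mul_conjTranspose_same (vecMul_injective_of_mulVec_surjective hB)

theorem eq_zero_of_smul_add_mulVec_eq_zero [Field R] [DecidableEq m] {J : Matrix m n R} {T : Matrix n m R}
    (hJT : J * T = 1) {g : n → R} (hg : J *ᵥ g = 0) {a : R} (ha : a ≠ 0) {f : m → R}
    (h : a • g + T *ᵥ f = 0) : f = 0 ∧ g = 0 := by
  have hf : f = 0 := by
    simpa [mulVec_add, mulVec_smul, hg, mulVec_mulVec, hJT] using congrArg (J *ᵥ ·) h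
  subst hf
  exact ⟨rfl, by simpa [ha] using h⟩

end Matrix

section RightInverses

variable {m n : ℕ} {J₂ : Matrix (Fin m) (Fin n) ℝ} {C : Matrix (Fin n) (Fin n) ℝ}

theorem mul_TCmat (hJ₂ : Function.Surjective J₂.mulVec) (hC : C.PosDef) :
    J₂ * TCmat J₂ C = 1 := by
  have hM := hC.inv.mul_mul_transpose_of_mulVec_surjective hJ₂
  rw [TCmat, ← Matrix.mul_assoc, ← Matrix.mul_assoc,
    mul_nonsing_inv _ ((isUnit_iff_isUnit_det _).mp hM.isUnit)]

theorem mul_T2 (hJ₂ : Function.Surjective J₂.mulVec) : J₂ * T2 J₂ = 1 := by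
  have hN : (J₂ * J₂ᵀ).PosDef := by
    simpa using PosDef.one.mul_mul_transpose_of_mulVec_surjective hJ₂
  rw [T2, ← Matrix.mul_assoc, mul_nonsing_inv _ ((isUnit_iff_isUnit_det _).mp hN.isUnit)]

theorem mul_one_sub_TCmat_mul (hJ₂ : Function.Surjective J₂.mulVec) (hC : C.PosDef) :
    J₂ * (1 - TCmat J₂ C * J₂) = 0 := by
  rw [Matrix.mul_sub, ← Matrix.mul_assoc, mul_TCmat hJ₂ hC, Matrix.one_mul, Matrix.mul_one,
    sub_self]

theorem mul_TCmat_of_isUnit_det (hC : IsUnit C.det) :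
    C * TCmat J₂ C = J₂ᵀ * (J₂ * C⁻¹ * J₂ᵀ)⁻¹ := by
  rw [TCmat, ← Matrix.mul_assoc, ← Matrix.mul_assoc, mul_nonsing_inv C hC, Matrix.one_mul]

theorem exists_transpose_mulVec_eq_of_projected_eq_zero (hC : IsUnit C.det) {g : Fin n → ℝ}
    (h : ((1 - TCmat J₂ C * J₂) * C⁻¹) *ᵥ g = 0) :
    ∃ μ : Fin m → ℝ, J₂ᵀ *ᵥ μ = g := by
  refine ⟨((J₂ * C⁻¹ * J₂ᵀ)⁻¹ * J₂ * C⁻¹) *ᵥ g, ?_⟩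
  have hCg : C⁻¹ *ᵥ g = (TCmat J₂ C * J₂ * C⁻¹) *ᵥ g := by
    rwa [Matrix.sub_mul, Matrix.one_mul, sub_mulVec, sub_eq_zero] at h
  calc J₂ᵀ *ᵥ (((J₂ * C⁻¹ * J₂ᵀ)⁻¹ * J₂ * C⁻¹) *ᵥ g)
      = C *ᵥ ((TCmat J₂ C * J₂ * C⁻¹) *ᵥ g) := by
        simp only [mulVec_mulVec, ← Matrix.mul_assoc, mul_TCmat_of_isUnit_det hC]
    _ = g := by rw [← hCg, mulVec_mulVec, mul_nonsing_inv C hC, one_mulVec]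

end RightInverses

theorem fixed_point_is_KKT_general {n m : ℕ}
    (J₁ : Fin n → ℝ) (F₂ : (Fin n → ℝ) → (Fin m → ℝ)) (xstar : Fin n → ℝ)
    (J₂ : Matrix (Fin m) (Fin n) ℝ) (hJ₂ : Function.Surjective J₂.mulVec)
    (C : Matrix (Fin n) (Fin n) ℝ) (hC : C.PosDef)
    (α : ℝ) (hα : α ∈ Set.Ioo (0 : ℝ) 1)
    (G : Fin n → ℝ) (hG : G = ((1 - TCmat J₂ C * J₂) * C⁻¹).mulVec J₁)
    (Δx : Fin n → ℝ) (hΔx : Δx = -(α • G) - (T2 J₂).mulVec (F₂ xstar))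
    (hfix : Δx = 0) :
    F₂ xstar = 0 ∧ ∃ lam : Fin m → ℝ, J₁ + J₂ᵀ.mulVec lam = 0 := by
  have hJG : J₂ *ᵥ G = 0 := by
    rw [hG, mulVec_mulVec, ← Matrix.mul_assoc, mul_one_sub_TCmat_mul hJ₂ hC, Matrix.zero_mul,
      zero_mulVec]
  have hstep : α • G + T2 J₂ *ᵥ F₂ xstar = 0 := by
    linear_combination (norm := module) -(hΔx.symm.trans hfix)
  obtain ⟨hF, hG0⟩ := eq_zero_of_smul_add_mulVec_eq_zero (mul_T2 hJ₂) hJG hα.1.ne' hstep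
  obtain ⟨μ, hμ⟩ := exists_transpose_mulVec_eq_of_projected_eq_zero
    ((isUnit_iff_isUnit_det C).mp hC.isUnit) (hG ▸ hG0)
  exact ⟨hF, -μ, by rw [mulVec_neg, hμ, add_neg_cancel]⟩

theorem fixed_point_is_KKT {n m : ℕ} (hn : 0 < n) (hm : 0 < m) (hmn : m ≤ n)
    (J₁ : Fin n → ℝ) (F₂ : (Fin n → ℝ) → (Fin m → ℝ)) (xstar : Fin n → ℝ)
    (J₂ : Matrix (Fin m) (Fin n) ℝ) (hJ₂ : Function.Surjective J₂.mulVec)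
    (C : Matrix (Fin n) (Fin n) ℝ) (hC : C.PosDef)
    (α : ℝ) (hα : α ∈ Set.Ioo (0 : ℝ) 1)
    (G : Fin n → ℝ) (hG : G = ((1 - TCmat J₂ C * J₂) * C⁻¹).mulVec J₁)
    (Δx : Fin n → ℝ) (hΔx : Δx = -(α • G) - (T2 J₂).mulVec (F₂ xstar))
    (hfix : Δx = 0) :
    F₂ xstar = 0 ∧ ∃ lam : Fin m → ℝ, J₁ + J₂ᵀ.mulVec lam = 0 :=
  fixed_point_is_KKT_general J₁ F₂ xstar J₂ hJ₂ C hC α hα G hG Δx hΔx hfix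
end

section
/- Let n, m be positive integers with m ≤ n, let B be a symmetric n×n real matrix, J₂ an m×n real matrix with full row rank, J₁ ∈ ℝⁿ and F₂ ∈ ℝᵐ vectors. Assume B is positive definite on the null space of J₂ (dᵀ B d > 0 for all nonzero d with J₂ d = 0) and let c̄ be such that C := B + c̄ J₂ᵀ J₂ is positive definite. Then the vector Δx := −(Iₙ − T^C J₂) C⁻¹ J₁ − T^C F₂ satisfies the QP-subproblem KKT system: J₂ Δx + F₂ = 0 and there exists λ ∈ ℝᵐ with B Δx + J₁ + J₂ᵀ λ = 0; moreover Δx is unique, i.e. if Δx′ and λ′ satisfy B Δx′ + J₁ + J₂ᵀ λ′ = 0 and J₂ Δx′ + F₂ = 0, then Δx′ = Δx (explicit expression (10) for the SQP search direction). -/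
open Matrix

/-!
Adding `c̄ J₂ᵀ J₂` to the Hessian leaves the KKT points of the QP unchanged and only shifts the
multiplier by `c̄ J₂ Δx`, so it suffices to solve the KKT system with the positive definite
Hessian `C`. There `Δx` is the range-space solution: `J₂ T^C = I` gives feasibility, and
`C T^C = J₂ᵀ S⁻¹` with `S = J₂ C⁻¹ J₂ᵀ` gives stationarity with multiplier
`S⁻¹ (F₂ - J₂ C⁻¹ J₁)`; `S` is positive definite because `J₂` has full row rank. For uniqueness,
the difference `d` of two solutions lies in `ker J₂` while `B d ∈ range J₂ᵀ`, so `dᵀ B d = 0`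
and hence `d = 0`.
-/

theorem Matrix.vecMul_injective_of_mulVec_surjective_s3 {m n R : Type*} [Fintype m] [Fintype n]
    [DecidableEq m] [CommSemiring R] {J : Matrix m n R} (hJ : Function.Surjective J.mulVec) :
    Function.Injective J.vecMul := by
  obtain ⟨X, hJX⟩ := mulVec_surjective_iff_exists_right_inverse.mp hJ
  refine Function.LeftInverse.injective (g := (· ᵥ* X)) fun x => ?_
  simp only [vecMul_vecMul, hJX, vecMul_one]

section KKT

variable {m n R : Type*} [Fintype m] [Fintype n] [CommRing R]
  {B C : Matrix n n R} {J : Matrix m n R} {g x x' : n → R} {f : m → R} {ν ν' : m → R}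

theorem kkt_penalty_shift {c : R} (hC : C = B + c • (Jᵀ * J))
    (h : C *ᵥ x + g + Jᵀ *ᵥ ν = 0) : B *ᵥ x + g + Jᵀ *ᵥ (ν + c • J *ᵥ x) = 0 := by
  rw [← h, hC, add_mulVec, smul_mulVec, ← mulVec_mulVec, mulVec_add, mulVec_smul]
  abel

theorem kkt_primal_unique [Preorder R] (hB : ∀ d, d ≠ 0 → J *ᵥ d = 0 → 0 < d ⬝ᵥ B *ᵥ d)
    (hstat : B *ᵥ x + g + Jᵀ *ᵥ ν = 0) (hfeas : J *ᵥ x + f = 0)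
    (hstat' : B *ᵥ x' + g + Jᵀ *ᵥ ν' = 0) (hfeas' : J *ᵥ x' + f = 0) : x' = x := by
  have hJd : J *ᵥ (x' - x) = 0 := by
    rw [mulVec_sub]; linear_combination (norm := module) hfeas' - hfeas
  have hBd : B *ᵥ (x' - x) = Jᵀ *ᵥ (ν - ν') := by
    rw [mulVec_sub, mulVec_sub]; linear_combination (norm := module) hstat' - hstat
  have hcurv : (x' - x) ⬝ᵥ B *ᵥ (x' - x) = 0 := by
    rw [hBd, dotProduct_mulVec, vecMul_transpose, hJd, zero_dotProduct]
  by_contra hne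
  exact (hB _ (sub_ne_zero.mpr hne) hJd).ne' hcurv

end KKT

section TCmat

variable {m n : ℕ} {J : Matrix (Fin m) (Fin n) ℝ} {C : Matrix (Fin n) (Fin n) ℝ}

theorem mul_TCmat_eq_one (hS : IsUnit (J * C⁻¹ * Jᵀ).det) : J * TCmat J C = 1 := by
  rw [TCmat, ← Matrix.mul_assoc, ← Matrix.mul_assoc, mul_nonsing_inv _ hS]

theorem hessian_mul_TCmat (hC : IsUnit C.det) : C * TCmat J C = Jᵀ * (J * C⁻¹ * Jᵀ)⁻¹ := by
  rw [TCmat, ← Matrix.mul_assoc, ← Matrix.mul_assoc, mul_nonsing_inv _ hC, Matrix.one_mul]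

variable {g x : Fin n → ℝ} {f : Fin m → ℝ}

theorem TCmat_direction_feasible (hS : IsUnit (J * C⁻¹ * Jᵀ).det)
    (hx : x = -(((1 - TCmat J C * J) * C⁻¹) *ᵥ g) - TCmat J C *ᵥ f) : J *ᵥ x + f = 0 := by
  rw [hx, mulVec_sub, mulVec_neg, mulVec_mulVec, mulVec_mulVec, ← Matrix.mul_assoc, Matrix.mul_sub,
    ← Matrix.mul_assoc, mul_TCmat_eq_one hS, Matrix.mul_one, Matrix.one_mul, sub_self,
    Matrix.zero_mul, zero_mulVec, one_mulVec]
  abel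

theorem TCmat_direction_stationary (hC : IsUnit C.det)
    (hx : x = -(((1 - TCmat J C * J) * C⁻¹) *ᵥ g) - TCmat J C *ᵥ f) :
    C *ᵥ x + g + Jᵀ *ᵥ ((J * C⁻¹ * Jᵀ)⁻¹ *ᵥ (f - J *ᵥ C⁻¹ *ᵥ g)) = 0 := by
  rw [hx, mulVec_sub, mulVec_neg, mulVec_mulVec, mulVec_mulVec, ← Matrix.mul_assoc, Matrix.mul_sub,
    ← Matrix.mul_assoc, hessian_mul_TCmat hC, Matrix.mul_one, Matrix.sub_mul,
    mul_nonsing_inv _ hC]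
  simp only [sub_mulVec, mulVec_sub, one_mulVec, mulVec_mulVec, Matrix.mul_assoc]
  abel

end TCmat

theorem sqp_direction_solves_QP_KKT_general {n m : ℕ}
    (B : Matrix (Fin n) (Fin n) ℝ)
    (J₂ : Matrix (Fin m) (Fin n) ℝ) (hJ₂ : Function.Surjective J₂.mulVec)
    (J₁ : Fin n → ℝ) (F₂ : Fin m → ℝ)
    (hBpos : ∀ d : Fin n → ℝ, d ≠ 0 → J₂.mulVec d = 0 → 0 < d ⬝ᵥ B.mulVec d)
    (cbar : ℝ) (C : Matrix (Fin n) (Fin n) ℝ) (hC : C = B + cbar • (J₂ᵀ * J₂))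
    (hCpos : C.PosDef)
    (Δx : Fin n → ℝ)
    (hΔx : Δx = -(((1 - TCmat J₂ C * J₂) * C⁻¹).mulVec J₁) - (TCmat J₂ C).mulVec F₂) :
    (J₂.mulVec Δx + F₂ = 0) ∧
    (∃ lam : Fin m → ℝ, B.mulVec Δx + J₁ + J₂ᵀ.mulVec lam = 0) ∧
    (∀ (Δx' : Fin n → ℝ) (lam' : Fin m → ℝ),
      B.mulVec Δx' + J₁ + J₂ᵀ.mulVec lam' = 0 → J₂.mulVec Δx' + F₂ = 0 → Δx' = Δx) := by
  have hS : (J₂ * C⁻¹ * J₂ᵀ).PosDef := by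
    simpa only [conjTranspose_eq_transpose_of_trivial] using
      hCpos.inv.mul_mul_conjTranspose_same (vecMul_injective_of_mulVec_surjective_s3 hJ₂)
  have hfeas := TCmat_direction_feasible hS.det_pos.ne'.isUnit hΔx
  have hstat := kkt_penalty_shift hC (TCmat_direction_stationary hCpos.det_pos.ne'.isUnit hΔx)
  exact ⟨hfeas, ⟨_, hstat⟩, fun _ _ hstat' hfeas' =>
    kkt_primal_unique hBpos hstat hfeas hstat' hfeas'⟩

theorem sqp_direction_solves_QP_KKT {n m : ℕ} (hn : 0 < n) (hm : 0 < m) (hmn : m ≤ n)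
    (B : Matrix (Fin n) (Fin n) ℝ) (hB : B.IsSymm)
    (J₂ : Matrix (Fin m) (Fin n) ℝ) (hJ₂ : Function.Surjective J₂.mulVec)
    (J₁ : Fin n → ℝ) (F₂ : Fin m → ℝ)
    (hBpos : ∀ d : Fin n → ℝ, d ≠ 0 → J₂.mulVec d = 0 → 0 < d ⬝ᵥ B.mulVec d)
    (cbar : ℝ) (C : Matrix (Fin n) (Fin n) ℝ) (hC : C = B + cbar • (J₂ᵀ * J₂))
    (hCpos : C.PosDef)
    (Δx : Fin n → ℝ)
    (hΔx : Δx = -(((1 - TCmat J₂ C * J₂) * C⁻¹).mulVec J₁) - (TCmat J₂ C).mulVec F₂) :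
    (J₂.mulVec Δx + F₂ = 0) ∧
    (∃ lam : Fin m → ℝ, B.mulVec Δx + J₁ + J₂ᵀ.mulVec lam = 0) ∧
    (∀ (Δx' : Fin n → ℝ) (lam' : Fin m → ℝ),
      B.mulVec Δx' + J₁ + J₂ᵀ.mulVec lam' = 0 → J₂.mulVec Δx' + F₂ = 0 → Δx' = Δx) :=
  sqp_direction_solves_QP_KKT_general B J₂ hJ₂ J₁ F₂ hBpos cbar C hC hCpos Δx hΔx
end
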